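/- Let n be a positive integer and let u : ℤ → ℝ be the triangle kernel u(k) = (n+1-|k|)/(n+1)² for |k| ≤ n and u(k) = 0 otherwise. Then sup over all nonzero f ∈ ℓ²(ℤ) of ‖Δ(f*u)‖₂ / ‖f‖₂ equals exactly 4/(n+1)². -/
import Mathlib


open scoped BigOperators

/-- Convolution of `f ∈ ℓ²(ℤ)` with a finitely supported kernel `u : ℤ → ℝ`:
`(f*u)(m) = ∑_{k} u(k) f(m-k)`. -/
noncomputable def conv (u : ℤ → ℝ) (f : ℤ → ℂ) : ℤ → ℂ :=
  fun m => ∑' k : ℤ, (u k : ℂ) * f (m - k)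

/-- The `ℓ²`-norm `(∑_{k∈ℤ} |f(k)|²)^{1/2}`. -/
noncomputable def l2norm (f : ℤ → ℂ) : ℝ :=
  Real.sqrt (∑' k : ℤ, ‖f k‖ ^ 2)

/-- The discrete derivative `(∇f)(k) = f(k+1) - f(k)`. -/
def dgrad (f : ℤ → ℂ) : ℤ → ℂ := fun k => f (k + 1) - f k

/-- The discrete Laplacian `(Δf)(k) = f(k+2) - 2f(k+1) + f(k)`. -/
def dlap (f : ℤ → ℂ) : ℤ → ℂ := fun k => f (k + 2) - 2 * f (k + 1) + f k

private lemma tel (F : ℤ → ℂ) (n : ℕ) :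
    ∑ k ∈ Finset.Icc (-(n:ℤ)) (n:ℤ), (F (k-2) - 2*F (k-1) + F k)
      = F (-(n:ℤ)-2) - F (-(n:ℤ)-1) - F ((n:ℤ)-1) + F (n:ℤ) := by
  induction n with
  | zero => norm_num; ring
  | succ m ih =>
    have hins : Finset.Icc (-((m:ℤ)+1)) ((m:ℤ)+1)
        = insert (-((m:ℤ)+1)) (insert ((m:ℤ)+1) (Finset.Icc (-(m:ℤ)) (m:ℤ))) := by
      ext x; simp only [Finset.mem_Icc, Finset.mem_insert]; omega
    push_cast
    rw [hins, Finset.sum_insert (by simp only [Finset.mem_insert, Finset.mem_Icc]; omega),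
      Finset.sum_insert (by simp only [Finset.mem_Icc]; omega), ih]
    ring_nf

private lemma key (F : ℤ → ℂ) (n : ℕ) :
    ∑ k ∈ Finset.Icc (-(n:ℤ)) (n:ℤ),
        (((n:ℝ) + 1 - ((|k| : ℤ) : ℝ) : ℝ) : ℂ) * (F (k-2) - 2*F (k-1) + F k)
      = F (-(n:ℤ)-2) - 2 * F (-1) + F (n:ℤ) := by
  induction n with
  | zero => norm_num
  | succ m ih =>
    have hins : Finset.Icc (-((m:ℤ)+1)) ((m:ℤ)+1)
        = insert (-((m:ℤ)+1)) (insert ((m:ℤ)+1) (Finset.Icc (-(m:ℤ)) (m:ℤ))) := by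
      ext x; simp only [Finset.mem_Icc, Finset.mem_insert]; omega
    push_cast at ih ⊢
    rw [hins, Finset.sum_insert (by simp only [Finset.mem_insert, Finset.mem_Icc]; omega),
      Finset.sum_insert (by simp only [Finset.mem_Icc]; omega)]
    have hcoef : ∀ k ∈ Finset.Icc (-(m:ℤ)) (m:ℤ),
        ((m:ℂ) + 1 + 1 - ((|(k:ℝ)| : ℝ) : ℂ)) * (F (k-2) - 2*F (k-1) + F k)
          = ((m:ℂ) + 1 - ((|(k:ℝ)| : ℝ) : ℂ)) * (F (k-2) - 2*F (k-1) + F k)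
            + (F (k-2) - 2*F (k-1) + F k) := by
      intro k _; ring
    rw [Finset.sum_congr rfl hcoef, Finset.sum_add_distrib, ih, tel F m]
    push_cast
    ring_nf
    push_cast
    ring_nf
    rw [show |(-1 - (m:ℝ))| = (m:ℝ)+1 by
        rw [abs_sub_comm, show (m:ℝ) - -1 = (m:ℝ)+1 by ring]; exact abs_of_nonneg (by positivity),
       show |(1 + (m:ℝ))| = (m:ℝ)+1 by
        rw [show (1:ℝ) + m = (m:ℝ)+1 by ring]; exact abs_of_nonneg (by positivity)]
    push_cast
    ring

private lemma dlap_conv (n : ℕ) (u : ℤ → ℝ)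
    (hu : ∀ k : ℤ, u k = if |k| ≤ (n : ℤ)
      then ((n : ℝ) + 1 - ((|k| : ℤ) : ℝ)) / ((n : ℝ) + 1) ^ 2 else 0)
    (f : ℤ → ℂ) (m : ℤ) :
    dlap (conv u f) m
      = ((((n:ℝ)+1)^2 : ℝ) : ℂ)⁻¹ * (f (m+(n:ℤ)+2) - 2*f (m+1) + f (m-(n:ℤ))) := by
  have hconv : ∀ x : ℤ, conv u f x
      = ∑ k ∈ Finset.Icc (-(n:ℤ)) (n:ℤ), (u k : ℂ) * f (x - k) := by
    intro x
    apply tsum_eq_sum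
    intro b hb
    have hb' : ¬ |b| ≤ (n:ℤ) := fun h => hb (Finset.mem_Icc.mpr (abs_le.mp h))
    rw [hu b, if_neg hb']; simp
  set F : ℤ → ℂ := fun j => f (m - j) with hFdef
  have hF : ∀ k ∈ Finset.Icc (-(n:ℤ)) (n:ℤ),
      (u k : ℂ) * f (m + 2 - k) - 2 * ((u k : ℂ) * f (m + 1 - k)) + (u k : ℂ) * f (m - k)
      = ((((n:ℝ)+1)^2 : ℝ) : ℂ)⁻¹ *
        ((((n:ℝ) + 1 - ((|k| : ℤ) : ℝ) : ℝ) : ℂ) * (F (k-2) - 2*F (k-1) + F k)) := by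
    intro k hk
    have hk' : |k| ≤ (n:ℤ) := abs_le.mpr (Finset.mem_Icc.mp hk)
    rw [hu k, if_pos hk', show m+2-k = m - (k-2) by ring, show m+1-k = m-(k-1) by ring]
    simp only [hFdef]
    push_cast
    ring
  have expand : dlap (conv u f) m
      = ∑ k ∈ Finset.Icc (-(n:ℤ)) (n:ℤ),
          ((u k : ℂ) * f (m + 2 - k) - 2 * ((u k : ℂ) * f (m + 1 - k)) + (u k : ℂ) * f (m - k)) := by
    simp only [dlap, hconv, Finset.sum_add_distrib, Finset.sum_sub_distrib, Finset.mul_sum]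
  rw [expand, Finset.sum_congr rfl hF, ← Finset.mul_sum, key F n]
  simp only [hFdef]
  rw [show m - (-(n:ℤ)-2) = m+(n:ℤ)+2 by ring, show m - (-1:ℤ) = m + 1 by ring]

private lemma two_toReal : (2 : ENNReal).toReal = ((2:ℕ) : ℝ) := by norm_num

private lemma two_toReal_pos : 0 < (2 : ENNReal).toReal := by rw [two_toReal]; norm_num

private lemma memℓp_two_iff (f : ℤ → ℂ) : Memℓp f 2 ↔ Summable (fun k => ‖f k‖ ^ 2) := by
  rw [memℓp_gen_iff two_toReal_pos]
  simp_rw [two_toReal, Real.rpow_natCast]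

private lemma memℓp_shift (f : ℤ → ℂ) (hf : Memℓp f 2) (a : ℤ) :
    Memℓp (fun k => f (k + a)) 2 := by
  rw [memℓp_two_iff] at hf ⊢
  have h2 := (Equiv.addRight a).summable_iff (f := fun k => ‖f k‖ ^ 2)
  exact Summable.congr (h2.mpr hf) (fun k => rfl)

private lemma l2norm_shift (f : ℤ → ℂ) (a : ℤ) : l2norm (fun k => f (k + a)) = l2norm f := by
  unfold l2norm
  congr 1
  exact (Equiv.addRight a).tsum_eq (fun k => ‖f k‖ ^ 2)

private lemma l2norm_smul (a : ℂ) (g : ℤ → ℂ) :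
    l2norm (fun m => a * g m) = ‖a‖ * l2norm g := by
  unfold l2norm
  rw [← Real.sqrt_sq (norm_nonneg a), ← Real.sqrt_mul (sq_nonneg _)]
  congr 1
  simp_rw [norm_mul, mul_pow]
  exact tsum_mul_left

private lemma l2norm_lp (x : lp (fun _ : ℤ => ℂ) 2) : l2norm ⇑x = ‖x‖ := by
  rw [lp.norm_eq_tsum_rpow two_toReal_pos x]
  simp_rw [two_toReal, Real.rpow_natCast]
  unfold l2norm
  rw [Real.sqrt_eq_rpow]
  norm_num

private lemma l2norm_comb_le (f : ℤ → ℂ) (hf : Memℓp f 2) (a b c : ℤ) :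
    l2norm (fun m => f (m + a) - 2 * f (m + b) + f (m + c)) ≤ 4 * l2norm f := by
  set xA : lp (fun _ : ℤ => ℂ) 2 := ⟨fun m => f (m + a), memℓp_shift f hf a⟩ with hA
  set xB : lp (fun _ : ℤ => ℂ) 2 := ⟨fun m => f (m + b), memℓp_shift f hf b⟩ with hB
  set xC : lp (fun _ : ℤ => ℂ) 2 := ⟨fun m => f (m + c), memℓp_shift f hf c⟩ with hC
  have hco : (fun m => f (m + a) - 2 * f (m + b) + f (m + c)) = ⇑(xA - (2:ℂ) • xB + xC) := by
    rw [lp.coeFn_add, lp.coeFn_sub, lp.coeFn_smul]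
    funext m
    simp [hA, hB, hC]
  rw [hco, l2norm_lp]
  have h1 : ‖xA - (2:ℂ) • xB + xC‖ ≤ ‖xA‖ + ‖(2:ℂ) • xB‖ + ‖xC‖ :=
    le_trans (norm_add_le _ _) (by gcongr; exact norm_sub_le _ _)
  have hnA : ‖xA‖ = l2norm f := by rw [← l2norm_lp xA]; exact l2norm_shift f a
  have hnB : ‖xB‖ = l2norm f := by rw [← l2norm_lp xB]; exact l2norm_shift f b
  have hnC : ‖xC‖ = l2norm f := by rw [← l2norm_lp xC]; exact l2norm_shift f c
  rw [norm_smul] at h1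
  simp only [hnA, hnB, hnC, Complex.norm_ofNat] at h1
  linarith

private lemma l2norm_pos (f : ℤ → ℂ) (hf : Memℓp f 2) (hf0 : f ≠ 0) : 0 < l2norm f := by
  obtain ⟨k, hk⟩ : ∃ k, f k ≠ 0 := by
    by_contra h
    push_neg at h
    exact hf0 (funext h)
  have hsum : Summable (fun k => ‖f k‖ ^ 2) := (memℓp_two_iff f).mp hf
  have : 0 < ∑' k : ℤ, ‖f k‖ ^ 2 :=
    Summable.tsum_pos hsum (fun i => sq_nonneg _) k (pow_pos (norm_pos_iff.mpr hk) 2)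
  exact Real.sqrt_pos.mpr this

private noncomputable def phi (M : ℕ) : ℤ → ℂ :=
  fun j => if |j| ≤ (M:ℤ) then (-1:ℂ)^j else 0

private noncomputable def tf (N : ℤ) (M : ℕ) : ℤ → ℂ :=
  fun k => if N ∣ k then phi M (k / N) else 0

private lemma tf_mul (N : ℤ) (hN : 0 < N) (M : ℕ) (j : ℤ) : tf N M (N * j) = phi M j := by
  unfold tf
  rw [if_pos ⟨j, rfl⟩, Int.mul_ediv_cancel_left _ hN.ne']

private lemma tf_ne (N : ℤ) (hN : 0 < N) (M : ℕ) : tf N M ≠ 0 := by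
  intro h
  have h0 : tf N M 0 = 0 := by rw [h]; rfl
  rw [show (0:ℤ) = N * 0 by ring, tf_mul N hN M 0] at h0
  unfold phi at h0
  simp at h0

private lemma tf_supp (N : ℤ) (hN : 0 < N) (M : ℕ) (k : ℤ)
    (hk : k ∉ Finset.image (fun j => N * j) (Finset.Icc (-(M:ℤ)) (M:ℤ))) : tf N M k = 0 := by
  unfold tf
  split_ifs with h
  · obtain ⟨j, rfl⟩ := h
    unfold phi
    rw [Int.mul_ediv_cancel_left _ hN.ne']
    rw [if_neg]
    intro hj
    exact hk (Finset.mem_image.mpr ⟨j, Finset.mem_Icc.mpr (abs_le.mp hj), rfl⟩)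
  · rfl

private lemma tf_summable (N : ℤ) (hN : 0 < N) (M : ℕ) : Summable (fun k => ‖tf N M k‖ ^ 2) :=
  summable_of_ne_finset_zero (s := Finset.image (fun j => N * j) (Finset.Icc (-(M:ℤ)) (M:ℤ)))
    (fun k hk => by rw [tf_supp N hN M k hk]; simp)

private lemma mul_inj (N : ℤ) (hN : 0 < N) : Function.Injective (fun j : ℤ => N * j) :=
  fun a b h => by simpa using mul_left_cancel₀ hN.ne' h

private lemma tf_tsum (N : ℤ) (hN : 0 < N) (M : ℕ) :
    ∑' k : ℤ, ‖tf N M k‖ ^ 2 = 2 * (M:ℝ) + 1 := by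
  rw [← Function.Injective.tsum_eq (mul_inj N hN) (f := fun k => ‖tf N M k‖ ^ 2)]
  · have h1 : ∀ j : ℤ, ‖tf N M (N * j)‖ ^ 2 = if |j| ≤ (M:ℤ) then (1:ℝ) else 0 := by
      intro j
      rw [tf_mul N hN M j]
      unfold phi
      split_ifs with h
      · rw [norm_zpow]; norm_num
      · simp
    calc ∑' j : ℤ, ‖tf N M (N * j)‖ ^ 2
        = ∑ j ∈ Finset.Icc (-(M:ℤ)) (M:ℤ), ‖tf N M (N * j)‖ ^ 2 := by
          apply tsum_eq_sum
          intro j hj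
          rw [h1 j, if_neg (fun hc => hj (Finset.mem_Icc.mpr (abs_le.mp hc)))]
      _ = ∑ j ∈ Finset.Icc (-(M:ℤ)) (M:ℤ), (1:ℝ) := by
          apply Finset.sum_congr rfl
          intro j hj
          rw [h1 j, if_pos (abs_le.mpr (Finset.mem_Icc.mp hj))]
      _ = 2 * (M:ℝ) + 1 := by
          rw [Finset.sum_const, Int.card_Icc]
          have : ((M:ℤ) + 1 - -(M:ℤ)).toNat = 2 * M + 1 := by omega
          rw [this]
          push_cast
          ring
  · intro k hk
    simp only [Function.mem_support] at hk
    have hdvd : N ∣ k := by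
      by_contra h
      unfold tf at hk
      rw [if_neg h] at hk
      simp at hk
    obtain ⟨j, rfl⟩ := hdvd
    exact ⟨j, rfl⟩

private lemma hh_lower (N : ℤ) (hN : 0 < N) (M : ℕ) (hM : 1 ≤ M)
    (hsum : Summable (fun k => ‖tf N M (k + N) - 2 * tf N M k + tf N M (k - N)‖ ^ 2)) :
    16 * (2 * (M:ℝ) - 1) ≤ ∑' k : ℤ, ‖tf N M (k + N) - 2 * tf N M k + tf N M (k - N)‖ ^ 2 := by
  set ψ : ℤ → ℝ := fun k => ‖tf N M (k + N) - 2 * tf N M k + tf N M (k - N)‖ ^ 2 with hψ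
  have hval : ∀ j : ℤ, |j| ≤ (M:ℤ) - 1 → ψ (N * j) = 16 := by
    intro j hj
    have e1 : N * j + N = N * (j + 1) := by ring
    have e2 : N * j - N = N * (j - 1) := by ring
    have hj' := abs_le.mp hj
    have a1 : |j + 1| ≤ (M:ℤ) := abs_le.mpr (by omega)
    have a2 : |j| ≤ (M:ℤ) := abs_le.mpr (by omega)
    have a3 : |j - 1| ≤ (M:ℤ) := abs_le.mpr (by omega)
    simp only [hψ, e1, e2, tf_mul N hN M]
    unfold phi
    rw [if_pos a1, if_pos a2, if_pos a3]
    have hz : (-1:ℂ) ≠ 0 := by norm_num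
    rw [zpow_add₀ hz, zpow_sub₀ hz]
    have : (-1:ℂ) ^ j * (-1:ℂ) ^ (1:ℤ) - 2 * (-1:ℂ) ^ j + (-1:ℂ) ^ j / (-1:ℂ) ^ (1:ℤ)
        = (-4) * (-1:ℂ) ^ j := by
      rw [zpow_one]
      ring_nf
    rw [this, norm_mul, norm_zpow]
    norm_num
  have hle : ∑ k ∈ Finset.image (fun j => N * j) (Finset.Icc (-((M:ℤ)-1)) ((M:ℤ)-1)), ψ k
      ≤ ∑' k : ℤ, ψ k :=
    Summable.sum_le_tsum _ (fun k _ => sq_nonneg _) hsum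
  have heq : ∑ k ∈ Finset.image (fun j => N * j) (Finset.Icc (-((M:ℤ)-1)) ((M:ℤ)-1)), ψ k
      = 16 * (2 * (M:ℝ) - 1) := by
    rw [Finset.sum_image (fun a _ b _ h => mul_inj N hN h)]
    rw [Finset.sum_congr rfl (fun j hj => hval j (abs_le.mpr (Finset.mem_Icc.mp hj)))]
    rw [Finset.sum_const, Int.card_Icc]
    have : ((M:ℤ) - 1 + 1 - -((M:ℤ) - 1)).toNat = 2 * M - 1 := by omega
    rw [this]
    have h2 : ((2 * M - 1 : ℕ) : ℝ) = 2 * (M:ℝ) - 1 := by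
      push_cast [Nat.cast_sub (by omega : 1 ≤ 2 * M)]
      ring
    rw [nsmul_eq_mul, h2]
    ring
  linarith [hle, heq]

theorem smoothest_average_laplacian_triangle_kernel
    (n : ℕ) (hn : 1 ≤ n) (u : ℤ → ℝ)
    (hu : ∀ k : ℤ, u k = if |k| ≤ (n : ℤ)
      then ((n : ℝ) + 1 - ((|k| : ℤ) : ℝ)) / ((n : ℝ) + 1) ^ 2 else 0) :
    sSup {r : ℝ | ∃ f : ℤ → ℂ, Memℓp f 2 ∧ f ≠ 0 ∧
        r = l2norm (dlap (conv u f)) / l2norm f} = 4 / ((n : ℝ) + 1) ^ 2 := by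
  have hc0 : (0:ℝ) < ((n:ℝ)+1)^2 := by positivity
  have hN : (0:ℤ) < (n:ℤ)+1 := by omega
  -- main pointwise/norm reduction
  have hmain : ∀ f : ℤ → ℂ, l2norm (dlap (conv u f))
      = (((n:ℝ)+1)^2)⁻¹ * l2norm (fun k => f (k + ((n:ℤ)+1)) - 2*f k + f (k - ((n:ℤ)+1))) := by
    intro f
    have hfun : dlap (conv u f)
        = fun m => ((((n:ℝ)+1)^2 : ℝ) : ℂ)⁻¹ *
            ((fun k => f (k + ((n:ℤ)+1)) - 2*f k + f (k - ((n:ℤ)+1))) (m + 1)) := by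
      funext m
      rw [dlap_conv n u hu f m]
      simp only
      rw [show m + 1 + ((n:ℤ)+1) = m + (n:ℤ) + 2 by ring,
          show m + 1 - ((n:ℤ)+1) = m - (n:ℤ) by ring]
    rw [hfun, l2norm_smul, l2norm_shift (fun k => f (k + ((n:ℤ)+1)) - 2*f k + f (k - ((n:ℤ)+1))) 1]
    congr 1
    rw [norm_inv, Complex.norm_real, Real.norm_eq_abs, abs_of_nonneg hc0.le]
  have hmem : ∀ f : ℤ → ℂ, Memℓp f 2 →
      Memℓp (fun k => f (k + ((n:ℤ)+1)) - 2*f k + f (k - ((n:ℤ)+1))) 2 := by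
    intro f hf
    have h1 := memℓp_shift f hf ((n:ℤ)+1)
    have h2 : Memℓp ((2:ℂ) • f) 2 := hf.const_smul (2:ℂ)
    have h3 : Memℓp (fun k => f (k - ((n:ℤ)+1))) 2 := by
      have h3' := memℓp_shift f hf (-((n:ℤ)+1))
      have : (fun k => f (k - ((n:ℤ)+1))) = (fun k => f (k + (-((n:ℤ)+1)))) :=
        funext fun k => by rw [sub_eq_add_neg]
      rw [this]; exact h3'
    exact (h1.sub h2).add h3
  have hub : ∀ r ∈ {r : ℝ | ∃ f : ℤ → ℂ, Memℓp f 2 ∧ f ≠ 0 ∧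
      r = l2norm (dlap (conv u f)) / l2norm f}, r ≤ 4 / ((n:ℝ)+1)^2 := by
    rintro r ⟨f, hf, hf0, rfl⟩
    rw [hmain f]
    have h4 : l2norm (fun k => f (k + ((n:ℤ)+1)) - 2*f k + f (k - ((n:ℤ)+1))) ≤ 4 * l2norm f := by
      have hfe : (fun k => f (k + ((n:ℤ)+1)) - 2*f k + f (k - ((n:ℤ)+1)))
          = (fun m => f (m + ((n:ℤ)+1)) - 2 * f (m + 0) + f (m + (-((n:ℤ)+1)))) := by
        funext m
        rw [add_zero, ← sub_eq_add_neg]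
      rw [hfe]
      exact l2norm_comb_le f hf ((n:ℤ)+1) 0 (-((n:ℤ)+1))
    have hpos := l2norm_pos f hf hf0
    rw [div_le_iff₀ hpos]
    calc (((n:ℝ)+1)^2)⁻¹ * l2norm (fun k => f (k + ((n:ℤ)+1)) - 2*f k + f (k - ((n:ℤ)+1)))
        ≤ (((n:ℝ)+1)^2)⁻¹ * (4 * l2norm f) := by gcongr
      _ = 4 / ((n:ℝ)+1)^2 * l2norm f := by field_simp
  apply csSup_eq_of_forall_le_of_forall_lt_exists_gt
  · -- nonempty
    refine ⟨_, ⟨tf ((n:ℤ)+1) 1, (memℓp_two_iff _).mpr (tf_summable _ hN 1),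
      tf_ne _ hN 1, rfl⟩⟩
  · exact hub
  · -- for every w < 4/c, there's an element above w
    intro w hw
    obtain ⟨K, hK⟩ := exists_nat_gt (32 / (16 - (w * ((n:ℝ)+1)^2)^2))
    set M : ℕ := max K 1 with hMdef
    have hM1 : 1 ≤ M := le_max_right _ _
    set f : ℤ → ℂ := tf ((n:ℤ)+1) M with hfdef
    have hfmem : Memℓp f 2 := (memℓp_two_iff _).mpr (tf_summable _ hN M)
    refine ⟨_, ⟨f, hfmem, tf_ne _ hN M, rfl⟩, ?_⟩
    rw [hmain f]
    have hLf : l2norm f = Real.sqrt (2*(M:ℝ)+1) := by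
      unfold l2norm
      rw [hfdef, tf_tsum _ hN M]
    have hsumhh := (memℓp_two_iff _).mp (hmem f hfmem)
    have hlow : Real.sqrt (16*(2*(M:ℝ)-1))
        ≤ l2norm (fun k => f (k + ((n:ℤ)+1)) - 2*f k + f (k - ((n:ℤ)+1))) :=
      Real.sqrt_le_sqrt (hh_lower _ hN M hM1 hsumhh)
    have hnum : w < (((n:ℝ)+1)^2)⁻¹ * Real.sqrt (16*(2*(M:ℝ)-1)) / Real.sqrt (2*(M:ℝ)+1) := by
      have hB : (0:ℝ) < 2*(M:ℝ)+1 := by positivity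
      have hA : (0:ℝ) ≤ 16*(2*(M:ℝ)-1) := by
        have : (1:ℝ) ≤ (M:ℝ) := by exact_mod_cast hM1
        nlinarith
      have hrw : (((n:ℝ)+1)^2)⁻¹ * Real.sqrt (16*(2*(M:ℝ)-1)) / Real.sqrt (2*(M:ℝ)+1)
          = Real.sqrt (16*(2*(M:ℝ)-1) / (2*(M:ℝ)+1)) / ((n:ℝ)+1)^2 := by
        rw [Real.sqrt_div hA]
        ring
      rw [hrw, lt_div_iff₀ hc0]
      rcases lt_or_ge (w * ((n:ℝ)+1)^2) 0 with hneg | hpos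
      · exact lt_of_lt_of_le hneg (Real.sqrt_nonneg _)
      · rw [Real.lt_sqrt hpos]
        have hwc4 : w * ((n:ℝ)+1)^2 < 4 := by
          have := (lt_div_iff₀ hc0).mp hw
          linarith
        have h16 : (w * ((n:ℝ)+1)^2)^2 < 16 := by nlinarith
        have hKle : (K:ℝ) ≤ (M:ℝ) := by exact_mod_cast le_max_left K 1
        have h32 : 32 < (16 - (w * ((n:ℝ)+1)^2)^2) * (K:ℝ) := by
          have hd : (0:ℝ) < 16 - (w * ((n:ℝ)+1)^2)^2 := by linarith
          have := (div_lt_iff₀ hd).mp hK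
          linarith [this]
        rw [lt_div_iff₀ hB]
        nlinarith [hKle, h32, hB]
    refine lt_of_lt_of_le hnum ?_
    rw [hLf]
    gcongr
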